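/- Let T_de : l∞ → l∞ be the delay map T_de(x) = (0, x_0, x_1, x_2, ...). Then a discount structure p ∈ Δ satisfies ⟨T_de(x), p⟩ = λ·⟨x, p⟩ for some λ ∈ ℝ and all x ∈ l∞ (i.e., p is an eigenvector of the adjoint T_de*) if and only if p is a Banach–Mazur limit or there exists δ ∈ [0,1) such that ⟨x,p⟩ = (1−δ)·Σ_{t=0}^∞ δ^t x_t for all x ∈ l∞. That is, Δ(T_de*) = ℬ ∪ { the exponential discounting functionals with parameter δ ∈ [0,1) }. -/

import Mathlib

open scoped ENNReal BoundedContinuousFunction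

noncomputable section

/-- `l∞`: the Banach space of bounded real sequences with the sup norm. -/
abbrev Linf : Type := BoundedContinuousFunction ℕ ℝ

/-- `ba(ℕ)`: the norm dual of `l∞`, endowed with the weak* topology. -/
abbrev Ba : Type := WeakDual ℝ Linf

/-- The constant sequence `(θ, θ, ...)`. -/
def cst (θ : ℝ) : Linf := BoundedContinuousFunction.const ℕ θ

/-- Build an element of `l∞` from a bounded sequence. -/
def ofSeq (f : ℕ → ℝ) (C : ℝ) (h : ∀ n, |f n| ≤ C) : Linf :=
  BoundedContinuousFunction.ofNormedAddCommGroupDiscrete f C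
    (by simpa [Real.norm_eq_abs] using h)

/-- The delayed sequence `(0, d₀, d₁, d₂, ...)`. -/
def delaySeq (d : Linf) : Linf :=
  ofSeq (fun n => if n = 0 then 0 else d (n - 1)) ‖d‖ (by
    intro n
    by_cases h : n = 0
    · simp [h]
    · simpa [h, Real.norm_eq_abs] using d.norm_coe_le_norm (n - 1))

/-- The shifted sequence `(x₁, x₂, x₃, ...)`. -/
def shiftSeq (x : Linf) : Linf :=
  x.compContinuous ⟨fun n => n + 1, continuous_of_discreteTopology⟩

/-- The permuted sequence `x_σ = (x_{σ 0}, x_{σ 1}, ...)`. -/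
def permSeq (σ : Equiv.Perm ℕ) (x : Linf) : Linf :=
  x.compContinuous ⟨fun n => σ n, continuous_of_discreteTopology⟩

/-- The indicator sequence of a set `A ⊆ ℕ`. -/
def indic (A : Set ℕ) : Linf :=
  ofSeq (A.indicator fun _ => (1 : ℝ)) 1 (by
    intro n
    by_cases h : n ∈ A
    · simp [Set.indicator_of_mem h]
    · simp [Set.indicator_of_notMem h])

/-- `kEx`: the sequence equal to `k` on `E` and to `x` off `E`. -/
def patch (k : ℝ) (E : Set ℕ) (x : Linf) : Linf :=
  ofSeq (fun n => E.indicator (fun _ => k) n + Eᶜ.indicator (fun m => x m) n)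
    (|k| + ‖x‖) (by
    intro n
    by_cases h : n ∈ E
    · simp only [Set.indicator_of_mem h, Set.indicator_of_notMem (by simpa using h :
        n ∉ Eᶜ), add_zero]
      exact le_add_of_le_of_nonneg le_rfl (norm_nonneg x)
    · simp only [Set.indicator_of_notMem h, Set.indicator_of_mem (by simpa using h :
        n ∈ Eᶜ), zero_add]
      calc |x n| ≤ ‖x‖ := by simpa [Real.norm_eq_abs] using x.norm_coe_le_norm n
      _ ≤ |k| + ‖x‖ := le_add_of_nonneg_left (abs_nonneg k))

/-- The exponential discounted sum `(1-δ) ∑ δ^t x_t` (convention `0^0 = 1`). -/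
def discSum (δ : ℝ) (x : Linf) : ℝ := (1 - δ) * ∑' t, δ ^ t * x t

/-! ### Axioms -/

/-- The strict (asymmetric) part of a relation. -/
def SPref (R : Linf → Linf → Prop) (x y : Linf) : Prop := R x y ∧ ¬ R y x

/-- (A1) Weak order: complete and transitive. -/
def A1 (R : Linf → Linf → Prop) : Prop :=
  (∀ x y, R x y ∨ R y x) ∧ ∀ x y z, R x y → R y z → R x z

/-- (A2) Monotonicity. -/
def A2 (R : Linf → Linf → Prop) : Prop :=
  (∀ x y : Linf, (∀ n, y n ≤ x n) → R x y) ∧ SPref R (cst 1) (cst 0)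

/-- (A3) Continuity. -/
def A3 (R : Linf → Linf → Prop) : Prop := ∀ x y z : Linf,
  IsClosed {α : ℝ | α ∈ Set.Icc (0 : ℝ) 1 ∧ R (α • x + (1 - α) • z) y} ∧
  IsClosed {α : ℝ | α ∈ Set.Icc (0 : ℝ) 1 ∧ R y (α • x + (1 - α) • z)}

/-- (A4) Invariance with respect to a common reference point. -/
def A4 (R : Linf → Linf → Prop) : Prop :=
  ∀ x y : Linf, ∀ θ : ℝ, R x y → R (x + cst θ) (y + cst θ)

/-- (A5) Convexity. -/
def A5 (R : Linf → Linf → Prop) : Prop :=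
  ∀ x y : Linf, ∀ θ lam : ℝ, lam ∈ Set.Icc (0 : ℝ) 1 →
    R x (cst θ) → R y (cst θ) → R (lam • x + (1 - lam) • y) (cst θ)

/-- Axioms (A1)-(A5) together. -/
def A15 (R : Linf → Linf → Prop) : Prop := A1 R ∧ A2 R ∧ A3 R ∧ A4 R ∧ A5 R

/-- (MC) Monotone continuity. -/
def MC (R : Linf → Linf → Prop) : Prop :=
  ∀ (x : Linf) (θ : ℝ), SPref R x (cst θ) →
    ∀ E : ℕ → Set ℕ, (∀ n, E (n + 1) ⊆ E n) → (⋂ n, E n) = ∅ →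
      ∀ k : ℝ, ∃ n₀ : ℕ, SPref R (patch k (E n₀) x) (cst θ)

/-- (IDIS) Invariance with respect to delaying improving sequences. -/
def IDIS (R : Linf → Linf → Prop) : Prop :=
  ∀ x d : Linf, R (x + d) x → R (x + delaySeq d) x

/-- (ISU) Invariance with respect to the scale of utils. -/
def ISU (R : Linf → Linf → Prop) : Prop :=
  ∀ x y : Linf, ∀ α : ℝ, 0 ≤ α → R x y → R (α • x) (α • y)

/-- (IOU) Invariance with respect to individual origins of utilities. -/
def IOU (R : Linf → Linf → Prop) : Prop :=
  ∀ x y z : Linf, (R x y ∧ R y x) → (R (x + z) (y + z) ∧ R (y + z) (x + z))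

/-- Strong monotonicity. -/
def StrongMono (R : Linf → Linf → Prop) : Prop :=
  (∀ x y : Linf, (∀ n, y n ≤ x n) → R x y) ∧
  ∀ x y : Linf, (∀ n, y n ≤ x n) → x ≠ y → SPref R x y

/-- (ITIS) Invariance with respect to applying `T` to improving sequences. -/
def ITIS (T : Linf → Linf) (R : Linf → Linf → Prop) : Prop :=
  ∀ x d : Linf, R (x + d) x → R (x + T d) x

/-- Time invariance: `x ∼ (x₁, x₂, x₃, ...)`. -/
def TimeInv (R : Linf → Linf → Prop) : Prop :=
  ∀ x : Linf, R x (shiftSeq x) ∧ R (shiftSeq x) x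

/-- `I` is a constant equivalent for `≿`: `x ∼ I(x)` for every `x`. -/
def ConstEquiv (R : Linf → Linf → Prop) (I : Linf → ℝ) : Prop :=
  ∀ x, R x (cst (I x)) ∧ R (cst (I x)) x

/-- `I` represents `≿`: `x ≿ y ↔ I(x) ≥ I(y)`. -/
def Represents (R : Linf → Linf → Prop) (I : Linf → ℝ) : Prop :=
  ∀ x y, R x y ↔ I y ≤ I x

/-! ### Discount structures -/

/-- A functional `p ∈ ba(ℕ)` is positive. -/
def IsPos (p : Ba) : Prop := ∀ x : Linf, (∀ n, 0 ≤ x n) → 0 ≤ p x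

/-- `Δ`: the set of discount structures. -/
def Delta : Set Ba := {p | IsPos p ∧ p (cst 1) = 1}

/-- `Δ^σ`: countably additive discount structures. -/
def DeltaSigma : Set Ba :=
  {p ∈ Delta | ∃ f : ℕ → ℝ, (∀ n, 0 ≤ f n) ∧ Summable f ∧ (∑' n, f n) = 1 ∧
    ∀ x : Linf, p x = ∑' n, f n * x n}

/-- `ℬ`: the set of Banach–Mazur limits. -/
def BM : Set Ba := {p ∈ Delta | ∀ x : Linf, p (shiftSeq x) = p x}

/-- The exponential discounting functionals with parameter `δ ∈ [0,1)`. -/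
def Geom : Set Ba := {p | ∃ δ ∈ Set.Ico (0 : ℝ) 1, ∀ x : Linf, p x = discSum δ x}

/-- `Δ(T*)`: discount structures that are eigenvectors of the adjoint of `T`,
expressed via the duality `⟨T x, p⟩ = λ ⟨x, p⟩`. -/
def DeltaT (T : Linf → Linf) : Set Ba :=
  {p ∈ Delta | ∃ lam : ℝ, ∀ x : Linf, p (T x) = lam * p x}

/-- A map `T : l∞ → l∞` is positive. -/
def PosMap (T : Linf → Linf) : Prop :=
  ∀ x : Linf, (∀ n, 0 ≤ x n) → ∀ n, 0 ≤ T x n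

/-- `ca(ℕ)`: countably additive elements of `ba(ℕ)`. -/
def caSet : Set Ba :=
  {μ | ∀ A : ℕ → Set ℕ, (∀ n, A (n + 1) ⊆ A n) → (⋂ n, A n) = ∅ →
    Filter.Tendsto (fun n => μ (indic (A n))) Filter.atTop (nhds 0)}

/-- `pa(ℕ)`: purely finitely additive elements of `ba(ℕ)`. -/
def paSet : Set Ba := {μ | ∀ n : ℕ, μ (indic {n}) = 0}

/-- `c` is grounded on `D`. -/
def Grounded (D : Set Ba) (c : Ba → ℝ≥0∞) : Prop := (⨅ p ∈ D, c p) = 0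

/-- `c` is grounded on `[0,1]`. -/
def Grounded01 (c : ℝ → ℝ≥0∞) : Prop := (⨅ δ ∈ Set.Icc (0 : ℝ) 1, c δ) = 0

/-- Maxmin form: `I(x) = min_{p ∈ D} ⟨x,p⟩`, the minimum being attained. -/
def MinForm (D : Set Ba) (I : Linf → ℝ) : Prop :=
  ∀ x, (∃ p ∈ D, I x = p x) ∧ ∀ p ∈ D, I x ≤ p x

/-- Variational form: `I(x) = min_{p ∈ D} {⟨x,p⟩ + c(p)}`, the minimum being attained. -/
def VarMinForm (D : Set Ba) (c : Ba → ℝ≥0∞) (I : Linf → ℝ) : Prop :=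
  ∀ x, (∃ p ∈ D, (I x : EReal) = (p x : EReal) + (c p : EReal)) ∧
    ∀ p ∈ D, (I x : EReal) ≤ (p x : EReal) + (c p : EReal)

/-- Maxmin discounting form over a set of discount factors `E ⊆ [0,1)`. -/
def MinDelta (E : Set ℝ) (I : Linf → ℝ) : Prop :=
  ∀ x, (∃ δ ∈ E, I x = discSum δ x) ∧ ∀ δ ∈ E, I x ≤ discSum δ x

/-- Variational discounting form over discount factors. -/
def VarMinDelta (E : Set ℝ) (c : ℝ → ℝ≥0∞) (I : Linf → ℝ) : Prop :=
  ∀ x, (∃ δ ∈ E, (I x : EReal) = (discSum δ x : EReal) + (c δ : EReal)) ∧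
    ∀ δ ∈ E, (I x : EReal) ≤ (discSum δ x : EReal) + (c δ : EReal)

/-- Convexity for `ℝ≥0∞`-valued functions on a subset of `ba(ℕ)`. -/
def ConvexENN (D : Set Ba) (g : Ba → ℝ≥0∞) : Prop :=
  ∀ p ∈ D, ∀ q ∈ D, ∀ a b : ℝ, 0 ≤ a → 0 ≤ b → a + b = 1 →
    g (a • p + b • q) ≤ ENNReal.ofReal a * g p + ENNReal.ofReal b * g q

/-! If `⟨T_de x, p⟩ = λ ⟨x, p⟩`, then `T_de 1 = 1 - e₀` gives `⟨e₀, p⟩ = 1 - λ`, so positivity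
forces `λ ∈ [0, 1]`, and `x = x₀ e₀ + T_de (x₁, x₂, ...)` gives the recursion
`⟨x, p⟩ = (1 - λ) x₀ + λ ⟨(x₁, x₂, ...), p⟩`. For `λ = 1` this is shift invariance; for `λ < 1`
unrolling it `N` times leaves a remainder of size at most `λ^N ‖x‖`, so `p` is exponential
discounting with `δ = λ`. Conversely, Banach–Mazur limits and exponential discounting are
eigenvectors with eigenvalues `1` and `δ`. -/

@[simp] lemma cst_apply (θ : ℝ) (n : ℕ) : cst θ n = θ := rfl

@[simp] lemma indic_apply (A : Set ℕ) (n : ℕ) :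
    indic A n = A.indicator (fun _ => (1 : ℝ)) n := rfl

@[simp] lemma delaySeq_apply_zero (x : Linf) : delaySeq x 0 = 0 := rfl

@[simp] lemma delaySeq_apply_succ (x : Linf) (n : ℕ) : delaySeq x (n + 1) = x n := rfl

@[simp] lemma shiftSeq_apply (x : Linf) (n : ℕ) : shiftSeq x n = x (n + 1) := rfl

lemma iterate_shiftSeq_apply (x : Linf) (N n : ℕ) : shiftSeq^[N] x n = x (n + N) := by
  induction N generalizing x with
  | zero => rfl
  | succ N ih =>
    rw [Function.iterate_succ_apply, ih, shiftSeq_apply]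
    congr 1

lemma shiftSeq_delaySeq (x : Linf) : shiftSeq (delaySeq x) = x := rfl

lemma delaySeq_shiftSeq (x : Linf) : delaySeq (shiftSeq x) = x - x 0 • indic {0} := by
  ext (_ | n) <;> simp

lemma delaySeq_cst_one : delaySeq (cst 1) = cst 1 - indic {0} := by
  ext (_ | n) <;> simp

section DiscountStructure

variable {p : Ba}

lemma IsPos.mono (hp : IsPos p) {x y : Linf} (h : ∀ n, x n ≤ y n) : p x ≤ p y := by
  have := hp (y - x) fun n => sub_nonneg.2 (h n)
  rwa [map_sub, sub_nonneg] at this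

lemma apply_cst_of_mem_Delta (hp : p ∈ Delta) (c : ℝ) : p (cst c) = c := by
  have : cst c = c • cst 1 := by ext; simp
  rw [this, map_smul, hp.2, smul_eq_mul, mul_one]

lemma abs_apply_le_of_mem_Delta (hp : p ∈ Delta) {x : Linf} {C : ℝ} (hC : ∀ n, |x n| ≤ C) :
    |p x| ≤ C := by
  refine abs_le.2 ⟨?_, ?_⟩
  · simpa [apply_cst_of_mem_Delta hp] using
      hp.1.mono (x := cst (-C)) fun n => neg_le_of_abs_le (hC n)
  · simpa [apply_cst_of_mem_Delta hp] using
      hp.1.mono (y := cst C) fun n => le_of_abs_le (hC n)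

end DiscountStructure

section ExponentialDiscounting

variable {δ : ℝ}

lemma summable_pow_mul (h0 : 0 ≤ δ) (h1 : δ < 1) (x : Linf) : Summable fun t => δ ^ t * x t := by
  refine Summable.of_norm_bounded ((summable_geometric_of_lt_one h0 h1).mul_right ‖x‖) fun t => ?_
  rw [Real.norm_eq_abs, abs_mul, abs_pow, abs_of_nonneg h0]
  gcongr
  simpa [Real.norm_eq_abs] using x.norm_coe_le_norm t

lemma discSum_delaySeq (h0 : 0 ≤ δ) (h1 : δ < 1) (x : Linf) :
    discSum δ (delaySeq x) = δ * discSum δ x := by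
  simp only [discSum]
  rw [(summable_pow_mul h0 h1 (delaySeq x)).tsum_eq_zero_add]
  simp only [delaySeq_apply_zero, mul_zero, zero_add, delaySeq_apply_succ, pow_succ]
  simp only [mul_comm _ δ, mul_assoc, tsum_mul_left]
  ring

lemma discSum_cst_one (h0 : 0 ≤ δ) (h1 : δ < 1) : discSum δ (cst 1) = 1 := by
  simp only [discSum, cst_apply, mul_one, tsum_geometric_of_lt_one h0 h1]
  field_simp [(sub_pos.2 h1).ne']

lemma discSum_nonneg (h0 : 0 ≤ δ) (h1 : δ ≤ 1) {x : Linf} (hx : ∀ n, 0 ≤ x n) :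
    0 ≤ discSum δ x :=
  mul_nonneg (sub_nonneg.2 h1) (tsum_nonneg fun t => mul_nonneg (pow_nonneg h0 t) (hx t))

lemma Geom_subset_Delta : Geom ⊆ Delta := by
  rintro p ⟨δ, ⟨h0, h1⟩, hp⟩
  refine ⟨fun x hx => ?_, ?_⟩
  · rw [hp]; exact discSum_nonneg h0 h1.le hx
  · rw [hp, discSum_cst_one h0 h1]

end ExponentialDiscounting

namespace DelayEigen

variable {p : Ba} {lam : ℝ}

lemma apply_indic_zero (hp : p ∈ Delta) (h : ∀ x, p (delaySeq x) = lam * p x) :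
    p (indic {0}) = 1 - lam := by
  have := h (cst 1)
  rw [delaySeq_cst_one, map_sub, hp.2] at this
  linarith

lemma nonneg (hp : p ∈ Delta) (h : ∀ x, p (delaySeq x) = lam * p x) : 0 ≤ lam := by
  have := hp.1 (delaySeq (cst 1)) fun n => by cases n <;> simp
  rwa [h, hp.2, mul_one] at this

lemma le_one (hp : p ∈ Delta) (h : ∀ x, p (delaySeq x) = lam * p x) : lam ≤ 1 := by
  have := hp.1 (indic {0}) fun n => Set.indicator_nonneg (fun _ _ => zero_le_one) n
  rw [apply_indic_zero hp h] at this
  linarith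

lemma apply_eq_add_shiftSeq (hp : p ∈ Delta) (h : ∀ x, p (delaySeq x) = lam * p x)
    (x : Linf) : p x = (1 - lam) * x 0 + lam * p (shiftSeq x) := by
  have := h (shiftSeq x)
  rw [delaySeq_shiftSeq, map_sub, map_smul, apply_indic_zero hp h, smul_eq_mul] at this
  linarith

lemma apply_eq_sum_add_iterate (hp : p ∈ Delta) (h : ∀ x, p (delaySeq x) = lam * p x)
    (x : Linf) (N : ℕ) :
    p x = (1 - lam) * ∑ t ∈ Finset.range N, lam ^ t * x t + lam ^ N * p (shiftSeq^[N] x) := by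
  induction N with
  | zero => simp
  | succ N ih =>
    rw [ih, apply_eq_add_shiftSeq hp h (shiftSeq^[N] x), iterate_shiftSeq_apply,
      ← Function.iterate_succ_apply' shiftSeq, Finset.sum_range_succ, zero_add]
    ring

lemma apply_eq_discSum (hp : p ∈ Delta) (h : ∀ x, p (delaySeq x) = lam * p x)
    (hlam : lam < 1) (x : Linf) : p x = discSum lam x := by
  have h0 := nonneg hp h
  have hx : ∀ n, |x n| ≤ ‖x‖ := fun n => by
    simpa [Real.norm_eq_abs] using x.norm_coe_le_norm n
  have hrem : Filter.Tendsto (fun N => lam ^ N * p (shiftSeq^[N] x)) Filter.atTop (nhds 0) := by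
    refine squeeze_zero_norm (fun N => ?_)
      (by simpa using (tendsto_pow_atTop_nhds_zero_of_lt_one h0 hlam).mul_const ‖x‖)
    rw [Real.norm_eq_abs, abs_mul, abs_of_nonneg (pow_nonneg h0 N)]
    gcongr
    exact abs_apply_le_of_mem_Delta hp fun n => by rw [iterate_shiftSeq_apply]; exact hx _
  have hsum : Filter.Tendsto (fun N => (1 - lam) * ∑ t ∈ Finset.range N, lam ^ t * x t)
      Filter.atTop (nhds (p x)) := by
    have hrest : ∀ N, (1 - lam) * ∑ t ∈ Finset.range N, lam ^ t * x t =
        p x - lam ^ N * p (shiftSeq^[N] x) := fun N => by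
      linarith [apply_eq_sum_add_iterate hp h x N]
    simpa [hrest] using (tendsto_const_nhds (x := p x)).sub hrem
  exact tendsto_nhds_unique hsum ((summable_pow_mul h0 hlam x).hasSum.tendsto_sum_nat.const_mul _)

end DelayEigen

/-- Lemma: eigenvectors of the adjoint of the delay map: a discount
structure `p` satisfies `⟨T_de(x), p⟩ = λ ⟨x, p⟩` for some `λ ∈ ℝ` and all `x` iff `p` is
a Banach–Mazur limit or an exponential discounting functional with parameter
`δ ∈ [0,1)`. -/
theorem stmt19 :
    {p ∈ Delta | ∃ lam : ℝ, ∀ x : Linf, p (delaySeq x) = lam * p x} = BM ∪ Geom := by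
  ext p
  constructor
  · rintro ⟨hp, lam, h⟩
    rcases (DelayEigen.le_one hp h).lt_or_eq with hlt | rfl
    · exact Or.inr ⟨lam, ⟨DelayEigen.nonneg hp h, hlt⟩, DelayEigen.apply_eq_discSum hp h hlt⟩
    · refine Or.inl ⟨hp, fun x => ?_⟩
      simpa using (DelayEigen.apply_eq_add_shiftSeq hp h x).symm
  · rintro (⟨hp, hshift⟩ | hgeom)
    · exact ⟨hp, 1, fun x => by rw [one_mul, ← hshift, shiftSeq_delaySeq]⟩
    · have hp := Geom_subset_Delta hgeom
      obtain ⟨δ, ⟨h0, h1⟩, hδ⟩ := hgeom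
      exact ⟨hp, δ, fun x => by rw [hδ, hδ, discSum_delaySeq h0 h1]⟩

end
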